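/- arXiv:math/9912122 — 4 statements merged into one kernel-verified Lean document; each statement's English description precedes it below -/
import Mathlib

section
/- Let H and H′ be complex Hilbert spaces and j : H → H′ an injective compact continuous linear operator. Let V be a complex vector space equipped with a norm ‖·‖_V and let ι : V → H be a linear map with ‖ιv‖_H ≤ ‖v‖_V for all v ∈ V. Then ι is a compact operator (i.e., the image under ι of the unit ball of V is relatively compact in H) if and only if for every ε > 0 there exists a constant C_ε > 0 such that ‖ιv‖²_H ≤ ε‖v‖²_V + C_ε‖j(ιv)‖²_{H′} for all v ∈ V. (This is the abstract content of the equivalence (2) ⇔ (3) in Lemma 1: compactness of the embedding of Dom ∂̄ ∩ Dom ∂̄* with the graph norm into L² is equivalent to the family of compactness estimates, with H′ playing the role of W^{−1}.) -/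
open Metric Filter Topology

/-- Let `H`, `H'` be complex Hilbert spaces and `j : H → H'` an injective
compact continuous linear operator.  Let `V` be a complex normed vector space and `ι : V → H`
a linear map with `‖ι v‖ ≤ ‖v‖` for all `v`.  Then `ι` is a compact operator (the image of the
unit ball of `V` is relatively compact in `H`) if and only if for every `ε > 0` there is a
constant `C_ε > 0` with `‖ι v‖² ≤ ε ‖v‖² + C_ε ‖j (ι v)‖²` for all `v ∈ V`. -/
theorem stmt4
    {H H' V : Type*}
    [NormedAddCommGroup H] [InnerProductSpace ℂ H] [CompleteSpace H]
    [NormedAddCommGroup H'] [InnerProductSpace ℂ H'] [CompleteSpace H']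
    [NormedAddCommGroup V] [NormedSpace ℂ V]
    (j : H →L[ℂ] H') (hj_inj : Function.Injective j) (hj_cpt : IsCompactOperator j)
    (ι : V →ₗ[ℂ] H) (hι : ∀ v : V, ‖ι v‖ ≤ ‖v‖) :
    IsCompact (closure (ι '' closedBall (0 : V) 1)) ↔
      ∀ ε > (0 : ℝ), ∃ C > (0 : ℝ), ∀ v : V,
        ‖ι v‖ ^ 2 ≤ ε * ‖v‖ ^ 2 + C * ‖j (ι v)‖ ^ 2 := by
  constructor
  · -- compactness ⇒ estimates
    intro hK
    by_contra hcon
    push_neg at hcon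
    obtain ⟨ε, hε, hcon⟩ := hcon
    choose v hv using fun n : ℕ => hcon (n + 1) (by positivity)
    have hvne : ∀ n, v n ≠ 0 := by
      intro n h0
      have := hv n
      rw [h0] at this
      simp at this
    have hvpos : ∀ n, (0 : ℝ) < ‖v n‖ := fun n => norm_pos_iff.2 (hvne n)
    set u : ℕ → V := fun n => ((‖v n‖ : ℂ))⁻¹ • v n with hu_def
    have hu1 : ∀ n, ‖u n‖ = 1 := by
      intro n
      simp only [hu_def, norm_smul, norm_inv, Complex.norm_real, norm_norm,
        abs_of_nonneg (norm_nonneg _)]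
      exact inv_mul_cancel₀ (hvpos n).ne'
    have hA : ∀ n, ‖ι (u n)‖ = ‖v n‖⁻¹ * ‖ι (v n)‖ := by
      intro n
      simp only [hu_def, map_smul, norm_smul, norm_inv, Complex.norm_real, norm_norm,
        abs_of_nonneg (norm_nonneg _)]
    have hB : ∀ n, ‖j (ι (u n))‖ = ‖v n‖⁻¹ * ‖j (ι (v n))‖ := by
      intro n
      simp only [hu_def, map_smul, norm_smul, norm_inv, Complex.norm_real, norm_norm,
        abs_of_nonneg (norm_nonneg _)]
    have key : ∀ n : ℕ, ε + ((n : ℝ) + 1) * ‖j (ι (u n))‖ ^ 2 < ‖ι (u n)‖ ^ 2 := by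
      intro n
      have h2 : (0 : ℝ) < ‖v n‖ ^ 2 := pow_pos (hvpos n) 2
      have step : (‖v n‖ ^ 2)⁻¹ * (ε * ‖v n‖ ^ 2 + ((n : ℝ) + 1) * ‖j (ι (v n))‖ ^ 2)
          < (‖v n‖ ^ 2)⁻¹ * ‖ι (v n)‖ ^ 2 :=
        mul_lt_mul_of_pos_left (hv n) (by positivity)
      rw [hA, hB, mul_pow, mul_pow, inv_pow]
      calc ε + ((n : ℝ) + 1) * ((‖v n‖ ^ 2)⁻¹ * ‖j (ι (v n))‖ ^ 2)
          = (‖v n‖ ^ 2)⁻¹ * (ε * ‖v n‖ ^ 2 + ((n : ℝ) + 1) * ‖j (ι (v n))‖ ^ 2) := by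
            rw [mul_add, ← mul_assoc (‖v n‖ ^ 2)⁻¹ ε, mul_comm (‖v n‖ ^ 2)⁻¹ ε, mul_assoc ε,
              inv_mul_cancel₀ h2.ne', mul_one]; ring
        _ < (‖v n‖ ^ 2)⁻¹ * ‖ι (v n)‖ ^ 2 := step
    have hmem : ∀ n, ι (u n) ∈ closure (ι '' closedBall (0 : V) 1) := by
      intro n
      exact subset_closure ⟨u n, by simp [mem_closedBall_zero_iff, hu1 n], rfl⟩
    obtain ⟨x, hxK, φ, hφ, hlim⟩ := hK.tendsto_subseq hmem
    -- ‖j (ι (u n))‖ ^ 2 ≤ 1 / (n+1)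
    have hjb : ∀ n : ℕ, ‖j (ι (u n))‖ ^ 2 ≤ 1 / ((n : ℝ) + 1) := by
      intro n
      have h1 : ‖ι (u n)‖ ^ 2 ≤ 1 := by
        have := hι (u n)
        rw [hu1 n] at this
        nlinarith [norm_nonneg (ι (u n))]
      have := key n
      rw [le_div_iff₀ (by positivity : (0:ℝ) < (n : ℝ) + 1)]
      nlinarith
    have hjlim : Tendsto (fun k => ‖j (ι (u (φ k)))‖ ^ 2) atTop (𝓝 0) := by
      apply squeeze_zero (fun k => by positivity) (fun k => ?_)
        tendsto_one_div_add_atTop_nhds_zero_nat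
      calc ‖j (ι (u (φ k)))‖ ^ 2 ≤ 1 / ((φ k : ℝ) + 1) := hjb (φ k)
        _ ≤ 1 / ((k : ℝ) + 1) := by
            apply one_div_le_one_div_of_le (by positivity)
            have : (k : ℝ) ≤ (φ k : ℝ) := by exact_mod_cast hφ.le_apply
            linarith
    have hjnorm : Tendsto (fun k => ‖j (ι (u (φ k)))‖) atTop (𝓝 0) := by
      have : Tendsto (fun k => Real.sqrt (‖j (ι (u (φ k)))‖ ^ 2)) atTop (𝓝 (Real.sqrt 0)) :=
        (Real.continuous_sqrt.tendsto 0).comp hjlim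
      simpa [Real.sqrt_sq (norm_nonneg _)] using this
    have hjzero : Tendsto (fun k => j (ι (u (φ k)))) atTop (𝓝 0) :=
      tendsto_zero_iff_norm_tendsto_zero.2 hjnorm
    have hjx : Tendsto (fun k => j (ι (u (φ k)))) atTop (𝓝 (j x)) :=
      (j.continuous.tendsto x).comp hlim
    have hx0 : x = 0 := by
      have : j x = 0 := tendsto_nhds_unique hjx hjzero
      exact hj_inj (by simpa using this)
    have hnlim : Tendsto (fun k => ‖ι (u (φ k))‖ ^ 2) atTop (𝓝 0) := by
      have : Tendsto (fun k => ‖ι (u (φ k))‖ ^ 2) atTop (𝓝 (‖x‖ ^ 2)) :=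
        ((continuous_norm.tendsto x).comp hlim).pow 2
      simpa [hx0] using this
    have hev : ∀ᶠ k in atTop, ‖ι (u (φ k))‖ ^ 2 < ε :=
      hnlim.eventually (eventually_lt_nhds hε)
    obtain ⟨k, hk⟩ := hev.exists
    have := key (φ k)
    nlinarith [mul_nonneg (by positivity : (0:ℝ) ≤ (φ k : ℝ) + 1)
      (sq_nonneg ‖j (ι (u (φ k)))‖)]
  · -- estimates ⇒ compactness
    intro h
    have htb : TotallyBounded (ι '' closedBall (0 : V) 1) := by
      rw [Metric.totallyBounded_iff]
      intro r hr
      obtain ⟨C, hC, hest⟩ := h (r ^ 2 / 16) (by positivity)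
      set δ : ℝ := Real.sqrt (r ^ 2 / (4 * C)) with hδ_def
      have hδ : 0 < δ := Real.sqrt_pos.2 (by positivity)
      have hδ2 : δ ^ 2 = r ^ 2 / (4 * C) := Real.sq_sqrt (by positivity)
      -- the image under j of the image of the ball is totally bounded
      have hBbdd : Bornology.IsBounded (ι '' closedBall (0 : V) 1) := by
        apply isBounded_iff_forall_norm_le.2 ⟨1, ?_⟩
        rintro x ⟨w, hw, rfl⟩
        rw [mem_closedBall_zero_iff] at hw
        exact (hι w).trans hw
      have hjB : TotallyBounded (j '' (ι '' closedBall (0 : V) 1)) := by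
        have hc : IsCompact (closure (j '' (ι '' closedBall (0 : V) 1))) :=
          hj_cpt.isCompact_closure_image_of_bounded hBbdd
        exact (hc.totallyBounded).subset subset_closure
      obtain ⟨t, hts, htfin, hcov⟩ := totallyBounded_iff_subset.1 hjB
        _ (Metric.dist_mem_uniformity hδ)
      -- choose preimages
      have hch : ∀ y : H', ∃ w : V, y ∈ t → (‖w‖ ≤ 1 ∧ j (ι w) = y) := by
        intro y
        by_cases hy : y ∈ t
        · obtain ⟨x, ⟨w, hw, rfl⟩, rfl⟩ := hts hy
          exact ⟨w, fun _ => ⟨by rwa [mem_closedBall_zero_iff] at hw, rfl⟩⟩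
        · exact ⟨0, fun hy' => absurd hy' hy⟩
      choose g hg using hch
      refine ⟨(fun y => ι (g y)) '' t, htfin.image _, ?_⟩
      rintro x ⟨w, hw, rfl⟩
      rw [mem_closedBall_zero_iff] at hw
      have : j (ι w) ∈ ⋃ y ∈ t, { z | dist z y < δ } :=
        hcov ⟨ι w, ⟨w, by simpa [mem_closedBall_zero_iff] using hw, rfl⟩, rfl⟩
      rw [Set.mem_iUnion₂] at this
      obtain ⟨y, hyt, hdy⟩ := this
      obtain ⟨hgw, hgj⟩ := hg y hyt
      rw [Set.mem_iUnion₂]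
      refine ⟨ι (g y), ⟨y, hyt, rfl⟩, ?_⟩
      rw [mem_ball, dist_eq_norm]
      have hsub : ι w - ι (g y) = ι (w - g y) := by rw [map_sub]
      have hest' := hest (w - g y)
      have hjd : ‖j (ι (w - g y))‖ < δ := by
        rw [map_sub, map_sub, ← dist_eq_norm, hgj]
        exact hdy
      have hwg : ‖w - g y‖ ≤ 2 := (norm_sub_le _ _).trans (by linarith)
      have ha : ‖w - g y‖ ^ 2 ≤ 4 := by nlinarith [norm_nonneg (w - g y)]
      have h1 : (r ^ 2 / 16) * ‖w - g y‖ ^ 2 ≤ r ^ 2 / 4 := by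
        have := mul_le_mul_of_nonneg_left ha (by positivity : (0:ℝ) ≤ r ^ 2 / 16)
        linarith
      have h2 : C * ‖j (ι (w - g y))‖ ^ 2 < C * δ ^ 2 := by
        apply mul_lt_mul_of_pos_left _ hC
        exact pow_lt_pow_left₀ hjd (norm_nonneg _) (by norm_num)
      have h3 : C * δ ^ 2 = r ^ 2 / 4 := by
        rw [hδ2]; field_simp
      have h4 : ‖ι (w - g y)‖ ^ 2 < r ^ 2 := by nlinarith
      rw [hsub]
      exact lt_of_pow_lt_pow_left₀ 2 hr.le h4
    exact TotallyBounded.isCompact_of_isClosed htb.closure isClosed_closure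
end

section
/- Let n ≥ 1 and 1 ≤ q ≤ n, and let d ∈ ℝⁿ be given by d_j = −1 for 1 ≤ j ≤ q−1 and d_j = q−1 for q ≤ j ≤ n. Then for every orthonormal family t¹, …, t^q of vectors in ℂⁿ, ∑_{i=1}^q ∑_{j=1}^n d_j |tⁱ_j|² ≥ 0. (This expresses that the function λ(z) = −∑_{j=1}^{q−1} |z_j|² + (q−1)∑_{j=q}^{n} |z_j|², whose complex Hessian is the diagonal matrix with entries d, belongs to the cone P_q(ℂⁿ) of functions subharmonic on every q-dimensional complex affine subspace.) -/
/-- Let `n ≥ 1`, `1 ≤ q ≤ n`, and let `d ∈ ℝⁿ` be given by `d j = -1` for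
the first `q - 1` coordinates and `d j = q - 1` for the remaining ones.  Then for every
orthonormal family `t¹, …, t^q` of vectors in `ℂⁿ` one has
`∑_{i=1}^q ∑_{j=1}^n d j * |tⁱ_j|² ≥ 0`. -/
theorem stmt11 {n q : ℕ} (hn : 1 ≤ n) (hq : 1 ≤ q) (hqn : q ≤ n)
    (d : Fin n → ℝ)
    (hd : ∀ j : Fin n, d j = if (j : ℕ) < q - 1 then (-1 : ℝ) else (q : ℝ) - 1)
    (t : Fin q → EuclideanSpace ℂ (Fin n)) (ht : Orthonormal ℂ t) :
    0 ≤ ∑ i : Fin q, ∑ j : Fin n, d j * ‖t i j‖ ^ 2 := by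
  classical
  set a : Fin q → Fin n → ℝ := fun i j => ‖t i j‖ ^ 2 with ha
  set F : Finset (Fin n) := Finset.univ.filter (fun j : Fin n => (j : ℕ) < q - 1) with hF
  -- each row sums to 1
  have hrow : ∀ i, ∑ j, a i j = 1 := by
    intro i
    have h1 : ‖t i‖ = 1 := ht.1 i
    have h2 : ‖t i‖ ^ 2 = ∑ j, ‖t i j‖ ^ 2 := by
      rw [EuclideanSpace.norm_eq (t i), Real.sq_sqrt]
      positivity
    simpa [h1] using h2.symm
  -- each column sums to at most 1 (Bessel)
  have hcol : ∀ j : Fin n, ∑ i, a i j ≤ 1 := by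
    intro j
    have hb := ht.sum_inner_products_le (s := Finset.univ)
      (EuclideanSpace.single j (1 : ℂ))
    have hx : ‖EuclideanSpace.single j (1 : ℂ)‖ = 1 := by
      simp [EuclideanSpace.norm_single]
    have hinner : ∀ i, ‖(inner ℂ (t i) (EuclideanSpace.single j (1 : ℂ)) : ℂ)‖ = ‖t i j‖ := by
      intro i
      rw [EuclideanSpace.inner_single_right]
      simp
    calc ∑ i, a i j = ∑ i, ‖(inner ℂ (t i) (EuclideanSpace.single j (1 : ℂ)) : ℂ)‖ ^ 2 := by
          simp [ha, hinner]
      _ ≤ ‖EuclideanSpace.single j (1 : ℂ)‖ ^ 2 := hb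
      _ = 1 := by rw [hx]; norm_num
  have hnn : ∀ i j, 0 ≤ a i j := fun i j => by positivity
  -- the filtered column sum is small
  have hcard : F.card ≤ q - 1 := by
    have himg : F.image Fin.val ⊆ Finset.range (q - 1) := by
      intro x hx
      simp only [Finset.mem_image] at hx
      obtain ⟨j, hj, rfl⟩ := hx
      rw [hF, Finset.mem_filter] at hj
      exact Finset.mem_range.mpr hj.2
    calc F.card = (F.image Fin.val).card :=
          (Finset.card_image_of_injective _ Fin.val_injective).symm
      _ ≤ (Finset.range (q - 1)).card := Finset.card_le_card himg
      _ = q - 1 := Finset.card_range _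
  have hS : ∑ j ∈ F, ∑ i, a i j ≤ (q : ℝ) - 1 := by
    calc ∑ j ∈ F, ∑ i, a i j ≤ ∑ j ∈ F, 1 := Finset.sum_le_sum fun j _ => hcol j
      _ = (F.card : ℝ) := by simp
      _ ≤ ((q - 1 : ℕ) : ℝ) := by exact_mod_cast hcard
      _ = (q : ℝ) - 1 := by
          rw [Nat.cast_sub hq]; norm_num
  -- key algebraic identity
  have key : ∑ i : Fin q, ∑ j : Fin n, d j * a i j
      = ((q : ℝ) - 1) * q - (q : ℝ) * ∑ j ∈ F, ∑ i, a i j := by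
    have step : ∀ i, ∑ j : Fin n, d j * a i j
        = ((q : ℝ) - 1) * 1 - (q : ℝ) * ∑ j ∈ F, a i j := by
      intro i
      have : ∑ j : Fin n, d j * a i j
          = ∑ j : Fin n, (((q : ℝ) - 1) * a i j
            - (if (j : ℕ) < q - 1 then (q : ℝ) * a i j else 0)) := by
        refine Finset.sum_congr rfl fun j _ => ?_
        rw [hd j]
        by_cases h : (j : ℕ) < q - 1 <;> simp [h] <;> ring
      rw [this, Finset.sum_sub_distrib, ← Finset.mul_sum, hrow i, ← Finset.sum_filter,
        ← Finset.mul_sum, hF]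
    rw [Finset.sum_congr rfl fun i _ => step i, Finset.sum_sub_distrib]
    rw [Finset.sum_const, Finset.sum_comm, ← Finset.mul_sum]
    simp [Finset.mul_sum]
    ring
  rw [key]
  have hq0 : (0 : ℝ) ≤ q := by positivity
  nlinarith [hS, hq0]
end

section
/- Let R > 0 and 0 < α < 2π, and let S = {r e^{iθ} : 0 < r < R, 0 < θ < α} ⊂ ℂ be an open circular sector. For 0 < a < 1 define the holomorphic function f_a on S by f_a(z) = ((2−2a)/α)^{1/2} R^{a−1} e^{−a L(z)}, where L(z) = log|z| + iθ(z) and θ(z) ∈ (0, α) is the angular coordinate of z. Then: (i) ∫_S |f_a|² dA = 1; (ii) for every subsector S′ = {r e^{iθ} : 0 < r < ρ, θ₁ < θ < θ₂} with 0 < ρ ≤ R and 0 ≤ θ₁ < θ₂ ≤ α, one has ∫_{S′} |f_a|² dA = ((θ₂−θ₁)/α)·(ρ/R)^{2−2a}, which tends to (θ₂−θ₁)/α > 0 as a → 1⁻; (iii) for every sequence (a_j) in (0,1) with a_j → 1, the sequence of restrictions (f_{a_j}|_{S′}) has no subsequence converging in L²(S′). In particular, the restriction operator between the corresponding Bergman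 spaces is not compact. (This is the key construction in the proof of Proposition 9, that an analytic disc in the boundary prevents compactness of N₁.) -/
open MeasureTheory Filter

noncomputable section

/-- The open circular sector `{r e^{iθ} : 0 < r < R, θ₁ < θ < θ₂}` in `ℂ`. -/
def sector (R θ₁ θ₂ : ℝ) : Set ℂ :=
  {z : ℂ | ∃ r θ : ℝ, 0 < r ∧ r < R ∧ θ₁ < θ ∧ θ < θ₂ ∧
    z = (r : ℂ) * Complex.exp (θ * Complex.I)}

lemma sector_eq_image (ρ θ₁ θ₂ : ℝ) :
    sector ρ θ₁ θ₂ = (fun p : ℝ × ℝ => (p.1 : ℂ) * Complex.exp (p.2 * Complex.I)) ''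
      (Set.Ioo 0 ρ ×ˢ Set.Ioo θ₁ θ₂) := by
  ext z
  constructor
  · rintro ⟨r, θ, h1, h2, h3, h4, rfl⟩
    exact ⟨(r, θ), ⟨⟨h1, h2⟩, h3, h4⟩, rfl⟩
  · rintro ⟨⟨r, θ⟩, ⟨⟨h1, h2⟩, h3, h4⟩, rfl⟩
    exact ⟨r, θ, h1, h2, h3, h4, rfl⟩

lemma norm_F (r θ : ℝ) (hr : 0 ≤ r) : ‖(r : ℂ) * Complex.exp (θ * Complex.I)‖ = r := by
  rw [norm_mul, Complex.norm_exp]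
  simp [abs_of_nonneg hr]

lemma F_injOn (ρ θ₁ θ₂ : ℝ) (hw : θ₂ - θ₁ < 2 * Real.pi) :
    Set.InjOn (fun p : ℝ × ℝ => (p.1 : ℂ) * Complex.exp (p.2 * Complex.I))
      (Set.Ioo 0 ρ ×ˢ Set.Ioo θ₁ θ₂) := by
  rintro ⟨r, θ⟩ ⟨⟨hr, _⟩, hθ1, hθ2⟩ ⟨r', θ'⟩ ⟨⟨hr', _⟩, hθ1', hθ2'⟩ h
  dsimp only at h hθ1 hθ2 hθ1' hθ2'
  have habs : r = r' := by
    have h2 := congrArg norm h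
    rwa [norm_F _ _ hr.le, norm_F _ _ hr'.le] at h2
  subst habs
  have hexp : Complex.exp (θ * Complex.I) = Complex.exp (θ' * Complex.I) :=
    mul_left_cancel₀ (by exact_mod_cast hr.ne' : (r : ℂ) ≠ 0) h
  obtain ⟨n, hn⟩ := Complex.exp_eq_exp_iff_exists_int.1 hexp
  have him : θ = θ' + n * (2 * Real.pi) := by
    have h3 := congrArg Complex.im hn
    simpa using h3
  have hπ := Real.pi_pos
  have hn0 : (n : ℝ) = 0 := by
    have h1 : (-1 : ℝ) < n := by nlinarith
    have h2 : (n : ℝ) < 1 := by nlinarith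
    have h1' : (-1 : ℤ) < n := by exact_mod_cast h1
    have h2' : n < 1 := by exact_mod_cast h2
    have : n = 0 := by omega
    simp [this]
  have : θ = θ' := by rw [him, hn0]; ring
  simp [this]

lemma sector_measurableSet (ρ θ₁ θ₂ : ℝ) (hw : θ₂ - θ₁ < 2 * Real.pi) :
    MeasurableSet (sector ρ θ₁ θ₂) := by
  rw [sector_eq_image]
  refine (measurableSet_Ioo.prod measurableSet_Ioo).image_of_continuousOn_injOn
    (Continuous.continuousOn ?_) (F_injOn ρ θ₁ θ₂ hw)
  exact (Complex.continuous_ofReal.comp continuous_fst).mul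
    (Complex.continuous_exp.comp ((Complex.continuous_ofReal.comp continuous_snd).mul
      continuous_const))

lemma aux_integral (ρ θ₁ θ₂ c : ℝ) (hρ : 0 < ρ) (h12 : θ₁ < θ₂)
    (hw : θ₂ - θ₁ < 2 * Real.pi) (hc : -2 < c) :
    (∫ z in sector ρ θ₁ θ₂, ‖z‖ ^ c) = (θ₂ - θ₁) * (ρ ^ (c + 2) / (c + 2)) ∧
    IntegrableOn (fun z : ℂ => ‖z‖ ^ c) (sector ρ θ₁ θ₂) := by
  set s : Set (ℝ × ℝ) := Set.Ioo 0 ρ ×ˢ Set.Ioo θ₁ θ₂ with hs_def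
  have hs : MeasurableSet s := measurableSet_Ioo.prod measurableSet_Ioo
  have hcomp : ∀ p : ℝ × ℝ,
      Complex.measurableEquivRealProd.symm (polarCoord.symm p) =
        (p.1 : ℂ) * Complex.exp (p.2 * Complex.I) := by
    intro p
    rw [Complex.measurableEquivRealProd_symm_apply]
    rw [Complex.exp_mul_I]
    apply Complex.ext <;> simp [polarCoord, Complex.cos_ofReal_re, Complex.sin_ofReal_re]
  have hsector : sector ρ θ₁ θ₂ =
      Complex.measurableEquivRealProd.symm '' (polarCoord.symm '' s) := by
    rw [sector_eq_image, ← Set.image_comp]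
    exact Set.image_congr' fun p => (hcomp p).symm
  set B : ℝ × ℝ → ℝ × ℝ →L[ℝ] ℝ × ℝ := fun p =>
    LinearMap.toContinuousLinearMap (Matrix.toLin (Module.Basis.finTwoProd ℝ) (Module.Basis.finTwoProd ℝ)
      !![Real.cos p.2, -p.1 * Real.sin p.2; Real.sin p.2, p.1 * Real.cos p.2]) with hB
  have hderiv : ∀ p ∈ s, HasFDerivWithinAt polarCoord.symm (B p) s p := fun p _ =>
    (hasFDerivAt_polarCoord_symm p).hasFDerivWithinAt
  have B_det : ∀ p : ℝ × ℝ, (B p).det = p.1 := by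
    intro p
    conv_rhs => rw [← one_mul p.1, ← Real.cos_sq_add_sin_sq p.2]
    simp only [B, neg_mul, LinearMap.det_toContinuousLinearMap, LinearMap.det_toLin,
      Matrix.det_fin_two_of, sub_neg_eq_add]
    ring
  have hinj : Set.InjOn polarCoord.symm s := by
    intro p hp q hq hpq
    refine F_injOn ρ θ₁ θ₂ hw hp hq ?_
    show (p.1 : ℂ) * Complex.exp (p.2 * Complex.I) = (q.1 : ℂ) * Complex.exp (q.2 * Complex.I)
    rw [← hcomp, ← hcomp, hpq]
  have hMP : MeasurePreserving Complex.measurableEquivRealProd.symm volume volume :=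
    Complex.volume_preserving_equiv_real_prod.symm
  have hemb : MeasurableEmbedding (Complex.measurableEquivRealProd.symm : ℝ × ℝ → ℂ) :=
    Complex.measurableEquivRealProd.symm.measurableEmbedding
  have hnormval : ∀ p ∈ s,
      (fun p : ℝ × ℝ => |(B p).det| •
        ‖Complex.measurableEquivRealProd.symm (polarCoord.symm p)‖ ^ c) p
        = p.1 ^ (c + 1) * 1 := by
    rintro ⟨r, θ⟩ ⟨hr, _⟩
    have hr0 : (0:ℝ) < r := hr.1
    simp only [B_det, hcomp, smul_eq_mul, mul_one]
    rw [norm_F _ _ hr0.le, abs_of_pos hr0, Real.rpow_add_one hr0.ne']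
    ring
  have hIoo1 : Integrable (fun x : ℝ => x ^ (c + 1)) (volume.restrict (Set.Ioo 0 ρ)) := by
    have := intervalIntegral.intervalIntegrable_rpow' (a := 0) (b := ρ)
      (by linarith : (-1:ℝ) < c + 1)
    rwa [intervalIntegrable_iff_integrableOn_Ioo_of_le hρ.le] at this
  have hIoo2 : IntegrableOn (fun _ : ℝ => (1:ℝ)) (Set.Ioo θ₁ θ₂) := by
    refine integrableOn_const ?_
    simp [Real.volume_Ioo]
  have hint_s : IntegrableOn (fun p : ℝ × ℝ => p.1 ^ (c + 1) * 1) s := by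
    rw [IntegrableOn, hs_def, Measure.volume_eq_prod, ← Measure.prod_restrict]
    exact Integrable.mul_prod hIoo1 hIoo2
  have hval1 : (∫ x in Set.Ioo (0:ℝ) ρ, x ^ (c + 1)) = ρ ^ (c + 2) / (c + 2) := by
    rw [← integral_Ioc_eq_integral_Ioo, ← intervalIntegral.integral_of_le hρ.le,
      integral_rpow (Or.inl (by linarith : (-1:ℝ) < c + 1))]
    rw [Real.zero_rpow (by linarith : c + 1 + 1 ≠ 0)]
    norm_num
    rw [show c + 1 + 1 = c + 2 by ring]
  have hval2 : (∫ _ in Set.Ioo θ₁ θ₂, (1:ℝ)) = θ₂ - θ₁ := by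
    simp [Real.volume_Ioo, h12.le, ENNReal.toReal_ofReal (by linarith : (0:ℝ) ≤ θ₂ - θ₁)]
  have hprodval : (∫ p in s, p.1 ^ (c + 1) * 1) = (θ₂ - θ₁) * (ρ ^ (c + 2) / (c + 2)) := by
    rw [hs_def, Measure.volume_eq_prod,
      setIntegral_prod_mul (fun x : ℝ => x ^ (c+1)) (fun _ : ℝ => (1:ℝ)), hval1, hval2]
    ring
  constructor
  · rw [hsector, hMP.setIntegral_image_emb hemb _ _,
      integral_image_eq_integral_abs_det_fderiv_smul volume hs hderiv hinj,
      setIntegral_congr_fun hs hnormval, hprodval]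
  · rw [hsector, hMP.integrableOn_image hemb,
      integrableOn_image_iff_integrableOn_abs_det_fderiv_smul volume hs hderiv hinj]
    exact hint_s.congr_fun (fun p hp => (hnormval p hp).symm) hs

/-- Let `S = {r e^{iθ} : 0 < r < R, 0 < θ < α}` with `R > 0`,
`0 < α < 2π`, and for `0 < a < 1` let `f_a(z) = ((2-2a)/α)^{1/2} R^{a-1} e^{-a L(z)}`, where
`L(z) = log|z| + iθ(z)`, `θ(z) ∈ (0, α)`, is the branch of the logarithm on `S`.  Then:
(i) `∫_S |f_a|² dA = 1`;
(ii) for every subsector `S' = {r e^{iθ} : 0 < r < ρ, θ₁ < θ < θ₂}` (with `0 < ρ ≤ R`,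
`0 ≤ θ₁ < θ₂ ≤ α`) one has `∫_{S'} |f_a|² dA = ((θ₂-θ₁)/α)·(ρ/R)^{2-2a}`, which tends to
`(θ₂-θ₁)/α > 0` as `a → 1⁻`;
(iii) for every sequence `(a_j) ⊂ (0,1)` with `a_j → 1`, the restrictions `f_{a_j}|_{S'}`
have no subsequence converging in `L²(S')`. -/
theorem stmt12 (R α : ℝ) (hR : 0 < R) (hα : 0 < α) (hα2 : α < 2 * Real.pi)
    (L : ℂ → ℂ)
    (hL : ∀ z ∈ sector R 0 α,
      Complex.exp (L z) = z ∧ 0 < (L z).im ∧ (L z).im < α)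
    (f : ℝ → ℂ → ℂ)
    (hf : ∀ (a : ℝ) (z : ℂ),
      f a z = ((Real.sqrt ((2 - 2 * a) / α) * R ^ (a - 1) : ℝ) : ℂ) *
        Complex.exp (-(a : ℂ) * L z)) :
    (∀ a : ℝ, 0 < a → a < 1 → ∫ z in sector R 0 α, ‖f a z‖ ^ 2 = 1)
    ∧ (∀ ρ θ₁ θ₂ : ℝ, 0 < ρ → ρ ≤ R → 0 ≤ θ₁ → θ₁ < θ₂ → θ₂ ≤ α →
        (∀ a : ℝ, 0 < a → a < 1 →
          ∫ z in sector ρ θ₁ θ₂, ‖f a z‖ ^ 2 = ((θ₂ - θ₁) / α) * (ρ / R) ^ (2 - 2 * a)) ∧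
        0 < (θ₂ - θ₁) / α ∧
        Tendsto (fun a : ℝ => ((θ₂ - θ₁) / α) * (ρ / R) ^ (2 - 2 * a))
          (nhdsWithin 1 (Set.Iio 1)) (nhds ((θ₂ - θ₁) / α)))
    ∧ (∀ ρ θ₁ θ₂ : ℝ, 0 < ρ → ρ ≤ R → 0 ≤ θ₁ → θ₁ < θ₂ → θ₂ ≤ α →
        ∀ a : ℕ → ℝ, (∀ j, 0 < a j ∧ a j < 1) → Tendsto a atTop (nhds 1) →
          ¬ ∃ σ : ℕ → ℕ, StrictMono σ ∧
            ∃ g : ℂ → ℂ, MemLp g 2 (volume.restrict (sector ρ θ₁ θ₂)) ∧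
              Tendsto (fun j => ∫ z in sector ρ θ₁ θ₂, ‖f (a (σ j)) z - g z‖ ^ 2)
                atTop (nhds 0)) := by
  have hπ := Real.pi_pos
  have hsub : ∀ {ρ θ₁ θ₂ : ℝ}, ρ ≤ R → 0 ≤ θ₁ → θ₂ ≤ α →
      sector ρ θ₁ θ₂ ⊆ sector R 0 α := by
    rintro ρ θ₁ θ₂ hρR h1 h2 z ⟨r, θ, hr, hrρ, hθ1, hθ2, rfl⟩
    exact ⟨r, θ, hr, lt_of_lt_of_le hrρ hρR, lt_of_le_of_lt h1 hθ1, lt_of_lt_of_le hθ2 h2, rfl⟩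
  have hzne : ∀ z ∈ sector R 0 α, z ≠ 0 := by
    intro z hz
    obtain ⟨hexp, -, -⟩ := hL z hz
    rw [← hexp]; exact Complex.exp_ne_zero _
  have hnormz : ∀ z ∈ sector R 0 α, 0 < ‖z‖ := fun z hz => norm_pos_iff.2 (hzne z hz)
  have hre : ∀ z ∈ sector R 0 α, (L z).re = Real.log ‖z‖ := by
    intro z hz
    obtain ⟨hexp, -, -⟩ := hL z hz
    have h2 := congrArg norm hexp
    rw [Complex.norm_exp] at h2
    rw [← h2, Real.log_exp]
  -- pointwise norm of f a
  have hnorm : ∀ (a : ℝ), a < 1 → ∀ z ∈ sector R 0 α,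
      ‖f a z‖ = (Real.sqrt ((2 - 2*a)/α) * R ^ (a - 1)) * ‖z‖ ^ (-a) := by
    intro a ha z hz
    rw [hf]
    rw [norm_mul, Complex.norm_real, Real.norm_eq_abs, Complex.norm_exp]
    have h1 : (-(a:ℂ) * L z).re = -(a * (L z).re) := by simp [Complex.mul_re]
    rw [h1, hre z hz,
      abs_of_nonneg (mul_nonneg (Real.sqrt_nonneg _) (Real.rpow_nonneg hR.le _))]
    congr 1
    rw [Real.rpow_def_of_pos (hnormz z hz)]
    ring_nf
  have hnormsq : ∀ (a : ℝ), a < 1 → ∀ z ∈ sector R 0 α,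
      ‖f a z‖ ^ 2 = (((2 - 2*a)/α) * R ^ (2*a - 2)) * ‖z‖ ^ (-(2*a)) := by
    intro a ha z hz
    rw [hnorm a ha z hz, mul_pow, mul_pow,
      Real.sq_sqrt (div_nonneg (by linarith) hα.le)]
    have e1 : (R ^ (a-1)) ^ 2 = R ^ (2*a - 2) := by
      rw [← Real.rpow_natCast (R ^ (a-1)) 2, ← Real.rpow_mul hR.le]
      norm_num; ring_nf
    have e2 : (‖z‖ ^ (-a)) ^ 2 = ‖z‖ ^ (-(2*a)) := by
      rw [← Real.rpow_natCast (‖z‖ ^ (-a)) 2, ← Real.rpow_mul (norm_nonneg z)]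
      norm_num; ring_nf
    rw [e1, e2]
  -- the key integral formula
  have key : ∀ ρ θ₁ θ₂ : ℝ, 0 < ρ → ρ ≤ R → 0 ≤ θ₁ → θ₁ < θ₂ → θ₂ ≤ α →
      ∀ a : ℝ, 0 < a → a < 1 →
      (∫ z in sector ρ θ₁ θ₂, ‖f a z‖ ^ 2) = ((θ₂ - θ₁)/α) * (ρ/R) ^ (2 - 2*a) := by
    intro ρ θ₁ θ₂ hρ hρR h0 h12 h2 a ha0 ha1
    have hw : θ₂ - θ₁ < 2 * Real.pi := by linarith
    have hms := sector_measurableSet ρ θ₁ θ₂ hw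
    rw [setIntegral_congr_fun hms (fun z hz => hnormsq a ha1 z (hsub hρR h0 h2 hz))]
    rw [integral_const_mul, (aux_integral ρ θ₁ θ₂ (-(2*a)) hρ h12 hw (by linarith)).1]
    rw [show -(2*a) + 2 = 2 - 2*a by ring]
    rw [Real.div_rpow hρ.le hR.le]
    have hRpos : (0:ℝ) < R ^ (2 - 2*a) := Real.rpow_pos_of_pos hR _
    have hR2 : R ^ (2*a - 2) = (R ^ (2 - 2*a))⁻¹ := by
      rw [← Real.rpow_neg hR.le]; ring_nf
    rw [hR2]
    have h2a : (2:ℝ) - 2*a ≠ 0 := by linarith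
    have h1a : (1:ℝ) - a ≠ 0 := by linarith
    field_simp
  refine ⟨?_, ?_, ?_⟩
  · intro a ha0 ha1
    rw [key R 0 α hR le_rfl le_rfl hα le_rfl a ha0 ha1]
    rw [sub_zero, div_self hα.ne', div_self hR.ne', Real.one_rpow, one_mul]
  · intro ρ θ₁ θ₂ hρ hρR h0 h12 h2
    refine ⟨fun a ha0 ha1 => key ρ θ₁ θ₂ hρ hρR h0 h12 h2 a ha0 ha1,
      div_pos (by linarith) hα, ?_⟩
    have hcont : ContinuousAt (fun t : ℝ => ((θ₂ - θ₁)/α) * (ρ/R) ^ (2 - 2*t)) 1 :=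
      continuousAt_const.mul
        ((Real.continuousAt_const_rpow (div_pos hρ hR).ne').comp (by fun_prop))
    have h1 : ((θ₂ - θ₁)/α) * (ρ/R) ^ (2 - 2*(1:ℝ)) = (θ₂ - θ₁)/α := by
      norm_num
    refine Tendsto.mono_left ?_ nhdsWithin_le_nhds
    have := hcont.tendsto
    rwa [h1] at this
  · intro ρ θ₁ θ₂ hρ hρR h0 h12 h2 a haj hatend
    rintro ⟨σ, hσ, g, hg2, hconv⟩
    set S' := sector ρ θ₁ θ₂ with hS'
    set μ := volume.restrict S' with hμ
    have hw : θ₂ - θ₁ < 2 * Real.pi := by linarith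
    have hms : MeasurableSet S' := sector_measurableSet ρ θ₁ θ₂ hw
    have hfin : volume S' < ⊤ := by
      refine lt_of_le_of_lt (measure_mono ?_)
        (MeasureTheory.measure_closedBall_lt_top (x := (0:ℂ)) (r := ρ))
      rintro z ⟨r, θ, hr, hrρ, -, -, rfl⟩
      simp only [Metric.mem_closedBall, dist_zero_right]
      rw [norm_F r θ hr.le]
      exact hrρ.le
    haveI : IsFiniteMeasure μ := ⟨by rw [hμ, Measure.restrict_apply_univ]; exact hfin⟩
    set b : ℕ → ℝ := fun j => a (σ j) with hb
    have hbtend : Tendsto b atTop (nhds 1) := hatend.comp hσ.tendsto_atTop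
    have hb01 : ∀ j, 0 < b j ∧ b j < 1 := fun j => haj (σ j)
    -- explicit formula for L, for measurability
    have hLf : ∀ z ∈ sector R 0 α,
        L z = Complex.log (z * Complex.exp (-((α:ℂ)/2) * Complex.I)) +
          ((α:ℂ)/2) * Complex.I := by
      intro z hz
      obtain ⟨hexp, him0, himα⟩ := hL z hz
      have hz0 : z ≠ 0 := hzne z hz
      set w := z * Complex.exp (-((α:ℂ)/2) * Complex.I) with hwdef
      have hw0 : w ≠ 0 := mul_ne_zero hz0 (Complex.exp_ne_zero _)
      have hexp2 : Complex.exp (Complex.log w + ((α:ℂ)/2) * Complex.I) = z := by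
        rw [Complex.exp_add, Complex.exp_log hw0, hwdef, mul_assoc, ← Complex.exp_add]
        rw [show -((α:ℂ)/2) * Complex.I + ((α:ℂ)/2) * Complex.I = 0 by ring]
        rw [Complex.exp_zero, mul_one]
      obtain ⟨n, hn⟩ := Complex.exp_eq_exp_iff_exists_int.1 (hexp.trans hexp2.symm)
      have himeq : (L z).im = Complex.arg w + α/2 + n * (2 * Real.pi) := by
        have h3 := congrArg Complex.im hn
        simpa [Complex.log_im] using h3
      have harg1 := Complex.neg_pi_lt_arg w
      have harg2 := Complex.arg_le_pi w
      have hn0 : n = 0 := by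
        have h1 : (-1 : ℝ) < n := by nlinarith
        have h2 : (n : ℝ) < 1 := by nlinarith
        have h1' : (-1 : ℤ) < n := by exact_mod_cast h1
        have h2' : n < 1 := by exact_mod_cast h2
        omega
      rw [hn0] at hn
      simpa using hn
    have hmeasf : ∀ t : ℝ, AEStronglyMeasurable (f t) μ := by
      intro t
      have hmh : Measurable (fun z : ℂ =>
          ((Real.sqrt ((2 - 2 * t) / α) * R ^ (t - 1) : ℝ) : ℂ) *
          Complex.exp (-(t:ℂ) *
            (Complex.log (z * Complex.exp (-((α:ℂ)/2) * Complex.I)) +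
              ((α:ℂ)/2) * Complex.I))) := by
        apply Measurable.const_mul
        apply Measurable.cexp
        apply Measurable.const_mul
        exact ((Complex.measurable_log.comp (measurable_id.mul_const _)).add_const _)
      refine hmh.aestronglyMeasurable.congr ?_
      rw [hμ]
      refine (ae_restrict_iff' hms).2 (Filter.Eventually.of_forall fun z hz => ?_)
      rw [hf, hLf z (hsub hρR h0 h2 hz)]
    have hint2 : ∀ j, Integrable (fun z => ‖f (b j) z‖ ^ 2) μ := by
      intro j
      have h1 := ((aux_integral ρ θ₁ θ₂ (-(2 * b j)) hρ h12 hw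
        (by linarith [(hb01 j).2])).2).const_mul (((2 - 2 * b j)/α) * R ^ (2 * b j - 2))
      refine h1.congr ?_
      refine (ae_restrict_iff' hms).2 (Filter.Eventually.of_forall fun z hz => ?_)
      exact (hnormsq (b j) (hb01 j).2 z (hsub hρR h0 h2 hz)).symm
    have hmem2 : ∀ j, MemLp (f (b j)) 2 μ := fun j =>
      (memLp_two_iff_integrable_sq_norm (hmeasf (b j))).2 (hint2 j)
    have hgint : Integrable g μ :=
      memLp_one_iff_integrable.1 (hg2.mono_exponent (by norm_num))
    have hfgmem : ∀ j, MemLp (fun z => f (b j) z - g z) 2 μ := fun j => (hmem2 j).sub hg2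
    have hfgint : ∀ j, Integrable (fun z => f (b j) z - g z) μ := fun j =>
      memLp_one_iff_integrable.1 ((hfgmem j).mono_exponent (by norm_num))
    have hfint : ∀ j, Integrable (f (b j)) μ := fun j =>
      memLp_one_iff_integrable.1 ((hmem2 j).mono_exponent (by norm_num))
    -- the L¹ norms of f (b j) tend to 0
    have hL1val : ∀ j, (∫ z in S', ‖f (b j) z‖) =
        (Real.sqrt ((2 - 2 * b j)/α) * R ^ (b j - 1)) *
          ((θ₂ - θ₁) * (ρ ^ (2 - b j) / (2 - b j))) := by
      intro j
      rw [setIntegral_congr_fun hms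
        (fun z hz => hnorm (b j) (hb01 j).2 z (hsub hρR h0 h2 hz))]
      rw [integral_const_mul,
        (aux_integral ρ θ₁ θ₂ (-(b j)) hρ h12 hw (by linarith [(hb01 j).2])).1]
      rw [show -(b j) + 2 = 2 - b j by ring]
    have hL1tend : Tendsto (fun j => ∫ z in S', ‖f (b j) z‖) atTop (nhds 0) := by
      set φ : ℝ → ℝ := fun t => (Real.sqrt ((2 - 2*t)/α) * R ^ (t - 1)) *
        ((θ₂ - θ₁) * (ρ ^ (2 - t) / (2 - t))) with hφdef
      have hφ : ContinuousAt φ 1 := by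
        apply ContinuousAt.mul
        · apply ContinuousAt.mul
          · exact Real.continuous_sqrt.continuousAt.comp (by fun_prop)
          · exact (Real.continuousAt_const_rpow hR.ne').comp (by fun_prop)
        · apply ContinuousAt.mul continuousAt_const
          apply ContinuousAt.div
          · exact (Real.continuousAt_const_rpow hρ.ne').comp (by fun_prop)
          · fun_prop
          · norm_num
      have hφ1 : φ 1 = 0 := by
        simp only [hφdef]
        norm_num
      have heq : (fun j => ∫ z in S', ‖f (b j) z‖) = φ ∘ b := funext fun j => hL1val j
      rw [heq, ← hφ1]
      exact hφ.tendsto.comp hbtend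
    -- the L¹ distances to g tend to 0 (Cauchy-Schwarz)
    have hA : Tendsto (fun j => ∫ z in S', ‖f (b j) z - g z‖) atTop (nhds 0) := by
      set V := (∫ z in S', (1:ℝ)) ^ ((1:ℝ)/2) with hV
      have hbound : ∀ j, (∫ z in S', ‖f (b j) z - g z‖) ≤
          (∫ z in S', ‖f (b j) z - g z‖ ^ 2) ^ ((1:ℝ)/2) * V := by
        intro j
        have hH := integral_mul_le_Lp_mul_Lq_of_nonneg (μ := μ)
          Real.HolderConjugate.two_two
          (Filter.Eventually.of_forall fun z => norm_nonneg (f (b j) z - g z))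
          (Filter.Eventually.of_forall fun _ => zero_le_one)
          (f := fun z => ‖f (b j) z - g z‖) (g := fun _ => (1:ℝ))
          (by rw [show ENNReal.ofReal 2 = 2 by norm_num]; exact (hfgmem j).norm)
          (by rw [show ENNReal.ofReal 2 = 2 by norm_num]; exact memLp_const 1)
        simp only [mul_one] at hH
        have hrw1 : (∫ z, ‖f (b j) z - g z‖ ^ (2:ℝ) ∂μ) =
            ∫ z in S', ‖f (b j) z - g z‖ ^ 2 := by
          rw [hμ]
          refine integral_congr_ae (Filter.Eventually.of_forall fun z => ?_)
          show ‖f (b j) z - g z‖ ^ (2:ℝ) = ‖f (b j) z - g z‖ ^ (2:ℕ)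
          rw [← Real.rpow_natCast (‖f (b j) z - g z‖) 2]
          norm_num
        have hrw2 : (∫ _ : ℂ, (1:ℝ) ^ (2:ℝ) ∂μ) = ∫ z in S', (1:ℝ) := by
          rw [hμ]
          exact integral_congr_ae (Filter.Eventually.of_forall fun z => by
            rw [Real.one_rpow])
        rw [hrw1, hrw2] at hH
        exact hH
      refine squeeze_zero (fun j => integral_nonneg fun z => norm_nonneg _) hbound ?_
      have hcont : ContinuousAt (fun x : ℝ => x ^ ((1:ℝ)/2)) 0 :=
        Real.continuousAt_rpow_const 0 _ (Or.inr (by norm_num))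
      have h1 := (hcont.tendsto.comp hconv).mul_const V
      simpa [Real.zero_rpow (by norm_num : (1:ℝ)/2 ≠ 0)] using h1
    -- triangle inequality
    have htri : ∀ j, (∫ z in S', ‖g z‖) ≤
        (∫ z in S', ‖f (b j) z - g z‖) + ∫ z in S', ‖f (b j) z‖ := by
      intro j
      rw [← integral_add ((hfgint j).norm) ((hfint j).norm)]
      refine integral_mono_of_nonneg (Filter.Eventually.of_forall fun z => norm_nonneg _)
        (((hfgint j).norm).add ((hfint j).norm))
        (Filter.Eventually.of_forall fun z => ?_)
      have hq := norm_sub_norm_le (g z) (f (b j) z)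
      have hq2 : ‖g z - f (b j) z‖ = ‖f (b j) z - g z‖ := norm_sub_rev _ _
      simp only [Pi.add_apply]
      linarith
    have hgnorm0 : (∫ z in S', ‖g z‖) = 0 := by
      have hle : (∫ z in S', ‖g z‖) ≤ 0 := by
        have h1 := ge_of_tendsto' (hA.add hL1tend) htri
        simpa using h1
      have hge : 0 ≤ ∫ z in S', ‖g z‖ := integral_nonneg fun z => norm_nonneg _
      linarith
    have hg0 : ∀ᵐ z ∂μ, g z = 0 := by
      have h1 := (integral_eq_zero_iff_of_nonneg_ae
        (Filter.Eventually.of_forall fun z => norm_nonneg (g z)) hgint.norm).1 hgnorm0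
      filter_upwards [h1] with z hz
      exact norm_eq_zero.1 hz
    have hJeq : ∀ j, (∫ z in S', ‖f (b j) z - g z‖ ^ 2) =
        ((θ₂ - θ₁)/α) * (ρ/R) ^ (2 - 2 * b j) := by
      intro j
      rw [← key ρ θ₁ θ₂ hρ hρR h0 h12 h2 (b j) (hb01 j).1 (hb01 j).2]
      refine integral_congr_ae ?_
      filter_upwards [hg0] with z hz
      rw [hz, sub_zero]
    have hNtend : Tendsto (fun j => ((θ₂ - θ₁)/α) * (ρ/R) ^ (2 - 2 * b j)) atTop
        (nhds ((θ₂ - θ₁)/α)) := by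
      have hcont : ContinuousAt (fun t : ℝ => ((θ₂ - θ₁)/α) * (ρ/R) ^ (2 - 2*t)) 1 :=
        continuousAt_const.mul
          ((Real.continuousAt_const_rpow (div_pos hρ hR).ne').comp (by fun_prop))
      have h1 := hcont.tendsto.comp hbtend
      have h2 : ((θ₂ - θ₁)/α) * (ρ/R) ^ (2 - 2*(1:ℝ)) = (θ₂ - θ₁)/α := by norm_num
      rwa [h2] at h1
    have hzero : Tendsto (fun j => ((θ₂ - θ₁)/α) * (ρ/R) ^ (2 - 2 * b j)) atTop (nhds 0) := by
      have heq : (fun j => ((θ₂ - θ₁)/α) * (ρ/R) ^ (2 - 2 * b j)) =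
          fun j => ∫ z in S', ‖f (b j) z - g z‖ ^ 2 := funext fun j => (hJeq j).symm
      rw [heq]
      exact hconv
    have hfinal := tendsto_nhds_unique hNtend hzero
    have hcpos : 0 < (θ₂ - θ₁)/α := div_pos (by linarith) hα
    linarith
end
end

section
/- Let Ω ⊂ ℂⁿ be a bounded open set and let h₁, …, hₙ ∈ A²(Ω). Then the function v = ∑_{j=1}^n conj(z_j)·h_j belongs to L²(Ω) and its weak ∂̄ equals (h₁,…,hₙ); moreover, the minimal solution of ∂̄u = (h₁,…,hₙ) exists and equals −∑_{j=1}^n [P, conj(z_j)] h_j, where [P, conj(z_j)] f = P(conj(z_j) f) − conj(z_j)·Pf and P is the orthogonal projection of L²(Ω) onto A²(Ω). Consequently, if each commutator [P, conj(z_j)], 1 ≤ j ≤ n, is a compact operator on L²(Ω), then the map (h₁,…,hₙ) ↦ (minimal solution of ∂̄u = (h₁,…,hₙ)), from (A²(Ω))ⁿ ⊆ L²(Ω;ℂⁿ) to L²(Ω), is compact; i.e., compactness of the commutators [P, conj(z_j)] implies compactness of the canonical solution operator restricted to (0,1)-forms with holomorphic coefficients. (This is the assertion of Remark 2.) -/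
set_option maxHeartbeats 1000000


open MeasureTheory

noncomputable section

/-- The Wirtinger derivative `∂φ/∂z̄ⱼ = (1/2)(∂φ/∂xⱼ + i ∂φ/∂yⱼ)`. -/
def dzbar {n : ℕ} (φ : (Fin n → ℂ) → ℂ) (j : Fin n) (z : Fin n → ℂ) : ℂ :=
  (1 / 2) * (fderiv ℝ φ z (Pi.single j 1) + Complex.I * fderiv ℝ φ z (Pi.single j Complex.I))

/-- Smooth compactly supported test functions on `Ω`. -/
def IsTest {n : ℕ} (Ω : Set (Fin n → ℂ)) (φ : (Fin n → ℂ) → ℂ) : Prop :=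
  ContDiff ℝ (⊤ : ℕ∞) φ ∧ HasCompactSupport φ ∧ tsupport φ ⊆ Ω

/-- `g` is the weak `∂̄` of `u`. -/
def IsWeakDbar {n : ℕ} (Ω : Set (Fin n → ℂ)) (u : (Fin n → ℂ) → ℂ)
    (g : (Fin n → ℂ) → Fin n → ℂ) : Prop :=
  ∀ φ, IsTest Ω φ → ∀ j, ∫ z in Ω, g z j * φ z = -∫ z in Ω, u z * dzbar φ j z

/-- `u` is the minimal solution of `∂̄ u = α`:  `u ∈ L²(Ω)`, the weak `∂̄` of `u` is `α`, and
`u` is orthogonal to the Bergman space `A²(Ω)` (the kernel of the weak `∂̄`). -/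
def IsMinSol {n : ℕ} (Ω : Set (Fin n → ℂ)) (α : (Fin n → ℂ) → Fin n → ℂ)
    (u : (Fin n → ℂ) → ℂ) : Prop :=
  MemLp u 2 (volume.restrict Ω) ∧ IsWeakDbar Ω u α ∧
  ∀ g : (Fin n → ℂ) → ℂ, MemLp g 2 (volume.restrict Ω) → IsWeakDbar Ω g 0 →
    ∫ z in Ω, u z * (starRingEnd ℂ) (g z) = 0

/-- The Bergman space `A²(Ω) ⊆ L²(Ω)`: the kernel of the weak `∂̄`. -/
def bergmanSpace {n : ℕ} (Ω : Set (Fin n → ℂ)) : Set (Lp ℂ 2 (volume.restrict Ω)) :=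
  {f | IsWeakDbar Ω f 0}

section helpers

open Filter

variable {n : ℕ} {Ω : Set (Fin n → ℂ)}

lemma coordBound (hΩ_open : IsOpen Ω) (hΩ_bdd : Bornology.IsBounded Ω) :
    ∃ C : ℝ, 0 ≤ C ∧ ∀ᵐ z ∂(volume.restrict Ω), ∀ j, ‖(starRingEnd ℂ) (z j)‖ ≤ C := by
  obtain ⟨C, hC⟩ := hΩ_bdd.exists_norm_le
  refine ⟨max C 0, le_max_right _ _, ?_⟩
  filter_upwards [ae_restrict_mem hΩ_open.measurableSet] with z hz j
  rw [RCLike.norm_conj]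
  exact le_trans (le_trans (norm_le_pi_norm z j) (hC z hz)) (le_max_left _ _)

lemma memL2_conj_mul (hΩ_open : IsOpen Ω) (hΩ_bdd : Bornology.IsBounded Ω)
    {f : (Fin n → ℂ) → ℂ} (hf : MemLp f 2 (volume.restrict Ω)) (j : Fin n) :
    MemLp (fun z => (starRingEnd ℂ) (z j) * f z) 2 (volume.restrict Ω) := by
  obtain ⟨C, hC0, hC⟩ := coordBound hΩ_open hΩ_bdd
  have hcont : Continuous fun z : Fin n → ℂ => (starRingEnd ℂ) (z j) :=
    Complex.continuous_conj.comp (continuous_apply j)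
  refine MemLp.of_le_mul (c := C) hf
    (hcont.aestronglyMeasurable.mul hf.aestronglyMeasurable) ?_
  filter_upwards [hC] with z hz
  rw [norm_mul]
  exact mul_le_mul_of_nonneg_right (hz j) (norm_nonneg _)

lemma dzbar_continuous {φ : (Fin n → ℂ) → ℂ} (hφ : ContDiff ℝ (⊤ : ℕ∞) φ) (j : Fin n) :
    Continuous (dzbar φ j) := by
  have hd : Continuous (fderiv ℝ φ) := hφ.continuous_fderiv (by simp)
  exact continuous_const.mul ((hd.clm_apply continuous_const).add
    (continuous_const.mul (hd.clm_apply continuous_const)))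

lemma dzbar_compactSupport {φ : (Fin n → ℂ) → ℂ} (hφ : HasCompactSupport φ) (j : Fin n) :
    HasCompactSupport (dzbar φ j) := by
  refine HasCompactSupport.intro hφ fun x hx => ?_
  have h0 : fderiv ℝ φ x = 0 := by
    by_contra h
    exact hx (support_fderiv_subset ℝ h)
  simp [dzbar, h0]

lemma dzbar_conj_mul {φ : (Fin n → ℂ) → ℂ} (hφ : ContDiff ℝ (⊤ : ℕ∞) φ) (j k : Fin n)
    (z : Fin n → ℂ) :
    dzbar (fun w => (starRingEnd ℂ) (w k) * φ w) j z =
      (if j = k then 1 else 0) * φ z + (starRingEnd ℂ) (z k) * dzbar φ j z := by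
  classical
  set L : (Fin n → ℂ) →L[ℝ] ℂ :=
    (Complex.conjCLE.toContinuousLinearMap).comp
      (ContinuousLinearMap.proj (R := ℝ) (φ := fun _ : Fin n => ℂ) k) with hL
  have hLa : ∀ w : Fin n → ℂ, L w = (starRingEnd ℂ) (w k) := fun w => rfl
  have hcd : DifferentiableAt ℝ (fun w : Fin n → ℂ => (starRingEnd ℂ) (w k)) z := by
    have := L.differentiableAt (x := z)
    simpa [funext hLa] using this
  have hφd : DifferentiableAt ℝ φ z := (hφ.differentiable (by simp)).differentiableAt
  have hff : fderiv ℝ (fun w : Fin n → ℂ => (starRingEnd ℂ) (w k)) z = L := by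
    rw [show (fun w : Fin n → ℂ => (starRingEnd ℂ) (w k)) = ⇑L from (funext hLa).symm]
    exact L.fderiv
  have hprod := fderiv_fun_mul (𝕜 := ℝ) hcd hφd
  rw [dzbar, hprod, hff]
  have e1 : L (Pi.single j 1) = if j = k then 1 else 0 := by
    rw [hLa, Pi.single_apply]
    rcases eq_or_ne j k with hjk | hjk
    · subst hjk; simp
    · rw [if_neg (fun hh => hjk hh.symm), if_neg hjk, map_zero]
  have e2 : L (Pi.single j Complex.I) = if j = k then -Complex.I else 0 := by
    rw [hLa, Pi.single_apply]
    rcases eq_or_ne j k with hjk | hjk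
    · subst hjk; simp
    · rw [if_neg (fun hh => hjk hh.symm), if_neg hjk, map_zero]
  simp only [ContinuousLinearMap.add_apply, ContinuousLinearMap.smul_apply, smul_eq_mul,
    e1, e2, dzbar]
  split_ifs with hjk
  · linear_combination (-(φ z) / 2) * Complex.I_sq
  · ring

lemma isTest_conj_mul {φ : (Fin n → ℂ) → ℂ} (hφ : IsTest Ω φ) (k : Fin n) :
    IsTest Ω (fun z => (starRingEnd ℂ) (z k) * φ z) := by
  obtain ⟨h1, h2, h3⟩ := hφ
  have hc : ContDiff ℝ (⊤ : ℕ∞) fun z : Fin n → ℂ => (starRingEnd ℂ) (z k) := by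
    have : (fun z : Fin n → ℂ => (starRingEnd ℂ) (z k)) =
        ⇑((Complex.conjCLE.toContinuousLinearMap).comp
          (ContinuousLinearMap.proj (R := ℝ) (φ := fun _ : Fin n => ℂ) k)) := rfl
    rw [this]; exact ContinuousLinearMap.contDiff _
  exact ⟨hc.mul h1, h2.mul_left, le_trans tsupport_mul_subset_right h3⟩

lemma integ_L2_mul_bdd {f g : (Fin n → ℂ) → ℂ} (hΩ_bdd : Bornology.IsBounded Ω)
    (hf : MemLp f 2 (volume.restrict Ω)) (hg : AEStronglyMeasurable g (volume.restrict Ω))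
    {C : ℝ} (hbd : ∀ᵐ z ∂(volume.restrict Ω), ‖g z‖ ≤ C) :
    Integrable (fun z => f z * g z) (volume.restrict Ω) := by
  haveI : IsFiniteMeasure (volume.restrict Ω) :=
    ⟨by rw [Measure.restrict_apply_univ]; exact hΩ_bdd.measure_lt_top⟩
  have hfi : Integrable f (volume.restrict Ω) := hf.integrable one_le_two
  refine (hfi.norm.const_mul C).mono' (hf.aestronglyMeasurable.mul hg) ?_
  filter_upwards [hbd] with z hz
  rw [norm_mul, mul_comm]
  exact mul_le_mul_of_nonneg_right hz (norm_nonneg _)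

lemma integ_L2_mul_dzbar {f φ : (Fin n → ℂ) → ℂ} (hΩ_bdd : Bornology.IsBounded Ω)
    (hf : MemLp f 2 (volume.restrict Ω)) (hφ : IsTest Ω φ) (j : Fin n) :
    Integrable (fun z => f z * dzbar φ j z) (volume.restrict Ω) := by
  obtain ⟨C, hC⟩ :=
    (dzbar_continuous hφ.1 j).bounded_above_of_compact_support (dzbar_compactSupport hφ.2.1 j)
  exact integ_L2_mul_bdd hΩ_bdd hf (dzbar_continuous hφ.1 j).aestronglyMeasurable
    (Filter.Eventually.of_forall hC)

lemma weakDbar_congr {u u' : (Fin n → ℂ) → ℂ} {g : (Fin n → ℂ) → Fin n → ℂ}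
    (hu : u =ᵐ[volume.restrict Ω] u') (h : IsWeakDbar Ω u g) : IsWeakDbar Ω u' g := by
  intro φ hφ j
  rw [h φ hφ j]
  congr 1
  refine integral_congr_ae ?_
  filter_upwards [hu] with z hz
  rw [hz]

lemma weakDbar_sub_same {u u' : (Fin n → ℂ) → ℂ} {α : (Fin n → ℂ) → Fin n → ℂ}
    (hΩ_bdd : Bornology.IsBounded Ω)
    (hu : IsWeakDbar Ω u α) (hu' : IsWeakDbar Ω u' α)
    (hu2 : MemLp u 2 (volume.restrict Ω)) (hu'2 : MemLp u' 2 (volume.restrict Ω)) :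
    IsWeakDbar Ω (fun z => u z - u' z) 0 := by
  intro φ hφ j
  have h1 := hu φ hφ j
  have h2 := hu' φ hφ j
  have hi1 := integ_L2_mul_dzbar hΩ_bdd hu2 hφ j
  have hi2 := integ_L2_mul_dzbar hΩ_bdd hu'2 hφ j
  have hsp : ∫ z in Ω, (u z - u' z) * dzbar φ j z =
      (∫ z in Ω, u z * dzbar φ j z) - ∫ z in Ω, u' z * dzbar φ j z := by
    rw [← integral_sub hi1 hi2]
    congr 1; funext z; ring
  rw [hsp]
  simp only [Pi.zero_apply, zero_mul, integral_zero]
  have h3 := neg_injective (h1.symm.trans h2)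
  rw [h3]; ring

lemma weakDbar_sub_zero {u u' : (Fin n → ℂ) → ℂ} {α : (Fin n → ℂ) → Fin n → ℂ}
    (hΩ_bdd : Bornology.IsBounded Ω)
    (hu : IsWeakDbar Ω u α) (hu' : IsWeakDbar Ω u' 0)
    (hu2 : MemLp u 2 (volume.restrict Ω)) (hu'2 : MemLp u' 2 (volume.restrict Ω)) :
    IsWeakDbar Ω (fun z => u z - u' z) α := by
  intro φ hφ j
  have h1 := hu φ hφ j
  have h2 := hu' φ hφ j
  simp only [Pi.zero_apply, zero_mul, integral_zero] at h2
  have hi1 := integ_L2_mul_dzbar hΩ_bdd hu2 hφ j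
  have hi2 := integ_L2_mul_dzbar hΩ_bdd hu'2 hφ j
  have hsp : ∫ z in Ω, (u z - u' z) * dzbar φ j z =
      (∫ z in Ω, u z * dzbar φ j z) - ∫ z in Ω, u' z * dzbar φ j z := by
    rw [← integral_sub hi1 hi2]
    congr 1; funext z; ring
  have h4 : (∫ z in Ω, u' z * dzbar φ j z) = 0 := neg_eq_zero.mp h2.symm
  rw [hsp, h1, h4]
  ring

lemma memL2_v (hΩ_open : IsOpen Ω) (hΩ_bdd : Bornology.IsBounded Ω)
    {h : Fin n → (Fin n → ℂ) → ℂ} (h_L2 : ∀ j, MemLp (h j) 2 (volume.restrict Ω)) :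
    MemLp (fun z => ∑ j, (starRingEnd ℂ) (z j) * h j z) 2 (volume.restrict Ω) :=
  memLp_finset_sum Finset.univ fun k _ => memL2_conj_mul hΩ_open hΩ_bdd (h_L2 k) k

lemma weakDbar_v (hΩ_open : IsOpen Ω) (hΩ_bdd : Bornology.IsBounded Ω)
    {h : Fin n → (Fin n → ℂ) → ℂ} (h_L2 : ∀ j, MemLp (h j) 2 (volume.restrict Ω))
    (h_hol : ∀ j, IsWeakDbar Ω (h j) 0) :
    IsWeakDbar Ω (fun z => ∑ j, (starRingEnd ℂ) (z j) * h j z) (fun z j => h j z) := by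
  intro φ hφ j
  obtain ⟨Cφ, hCφ⟩ := hφ.1.continuous.bounded_above_of_compact_support hφ.2.1
  have key : ∀ k : Fin n, ∫ z in Ω, ((starRingEnd ℂ) (z k) * h k z) * dzbar φ j z
      = -((if j = k then 1 else 0) * ∫ z in Ω, h k z * φ z) := by
    intro k
    have h0 := h_hol k (fun z => (starRingEnd ℂ) (z k) * φ z) (isTest_conj_mul hφ k) j
    simp only [Pi.zero_apply, zero_mul, integral_zero] at h0
    have hψint : ∫ z in Ω, h k z * dzbar (fun w => (starRingEnd ℂ) (w k) * φ w) j z = 0 :=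
      neg_eq_zero.mp h0.symm
    have hi1 : Integrable (fun z => (if j = k then 1 else 0) * (h k z * φ z))
        (volume.restrict Ω) :=
      ((integ_L2_mul_bdd hΩ_bdd (h_L2 k) hφ.1.continuous.aestronglyMeasurable
        (Filter.Eventually.of_forall hCφ))).const_mul _
    have hi2 : Integrable (fun z => ((starRingEnd ℂ) (z k) * h k z) * dzbar φ j z)
        (volume.restrict Ω) :=
      integ_L2_mul_dzbar hΩ_bdd (memL2_conj_mul hΩ_open hΩ_bdd (h_L2 k) k) hφ j
    have hsplit : ∫ z in Ω, h k z * dzbar (fun w => (starRingEnd ℂ) (w k) * φ w) j z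
        = (∫ z in Ω, (if j = k then 1 else 0) * (h k z * φ z))
          + ∫ z in Ω, ((starRingEnd ℂ) (z k) * h k z) * dzbar φ j z := by
      rw [← integral_add hi1 hi2]
      refine integral_congr_ae (Filter.Eventually.of_forall fun z => ?_)
      show h k z * dzbar (fun w => (starRingEnd ℂ) (w k) * φ w) j z = _
      rw [dzbar_conj_mul hφ.1]
      ring
    rw [hsplit] at hψint
    rw [integral_const_mul] at hψint
    linear_combination hψint
  have hint : ∀ k : Fin n, Integrable
      (fun z => ((starRingEnd ℂ) (z k) * h k z) * dzbar φ j z) (volume.restrict Ω) :=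
    fun k => integ_L2_mul_dzbar hΩ_bdd (memL2_conj_mul hΩ_open hΩ_bdd (h_L2 k) k) hφ j
  have hsum : ∫ z in Ω, (∑ k, (starRingEnd ℂ) (z k) * h k z) * dzbar φ j z
      = ∑ k, ∫ z in Ω, ((starRingEnd ℂ) (z k) * h k z) * dzbar φ j z := by
    rw [← integral_finset_sum Finset.univ fun k _ => hint k]
    refine integral_congr_ae (Filter.Eventually.of_forall fun z => ?_)
    show (∑ k, (starRingEnd ℂ) (z k) * h k z) * dzbar φ j z = _
    rw [Finset.sum_mul]
  rw [hsum]
  have hfin : ∑ k, ∫ z in Ω, ((starRingEnd ℂ) (z k) * h k z) * dzbar φ j z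
      = -∫ z in Ω, h j z * φ z := by
    simp only [key]
    rw [Finset.sum_neg_distrib]
    congr 1
    simp [ite_mul, Finset.sum_ite_eq, Finset.mem_univ]
  rw [hfin, neg_neg]

end helpers

section helpers2

open Filter

variable {n : ℕ} {Ω : Set (Fin n → ℂ)}

local notation "μΩ" Ω => (volume.restrict Ω)

lemma Lp_coeFn_sum {ι : Type*} [DecidableEq ι] (s : Finset ι)
    (F : ι → Lp ℂ 2 (volume.restrict Ω)) :
    ⇑(∑ j ∈ s, F j) =ᵐ[volume.restrict Ω] fun z => ∑ j ∈ s, F j z := by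
  induction s using Finset.induction_on with
  | empty => simp only [Finset.sum_empty]; exact Lp.coeFn_zero (E := ℂ) (p := 2) (μ := volume.restrict Ω)
  | @insert a s ha ih =>
      rw [Finset.sum_insert ha]
      filter_upwards [Lp.coeFn_add (F a) (∑ j ∈ s, F j), ih] with z h1 h2
      rw [h1]
      simp only [Pi.add_apply, h2, Finset.sum_insert ha]

lemma integ_mul_conj {f g : (Fin n → ℂ) → ℂ} (F G : Lp ℂ 2 (volume.restrict Ω))
    (hf : ⇑F =ᵐ[volume.restrict Ω] f) (hg : ⇑G =ᵐ[volume.restrict Ω] g) :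
    Integrable (fun z => f z * (starRingEnd ℂ) (g z)) (volume.restrict Ω) := by
  have h := L2.integrable_inner (𝕜 := ℂ) G F
  refine h.congr ?_
  filter_upwards [hf, hg] with z h1 h2
  simp only [RCLike.inner_apply, h1, h2]

lemma integral_mul_conj_eq {f g : (Fin n → ℂ) → ℂ} (F G : Lp ℂ 2 (volume.restrict Ω))
    (hf : ⇑F =ᵐ[volume.restrict Ω] f) (hg : ⇑G =ᵐ[volume.restrict Ω] g) :
    ∫ z in Ω, f z * (starRingEnd ℂ) (g z) = (starRingEnd ℂ) (inner (𝕜 := ℂ) F G) := by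
  rw [L2.inner_def, ← integral_conj]
  refine integral_congr_ae ?_
  filter_upwards [hf, hg] with z h1 h2
  simp only [RCLike.inner_apply, map_mul, Complex.conj_conj, h1, h2]
  ring

lemma toLp_norm_sq_eq {f : (Fin n → ℂ) → ℂ} (hf : MemLp f 2 (volume.restrict Ω)) :
    ‖hf.toLp f‖ ^ 2 = ∫ z in Ω, ‖f z‖ ^ 2 := by
  have h1 : ‖hf.toLp f‖ ^ 2 = RCLike.re (inner (𝕜 := ℂ) (hf.toLp f) (hf.toLp f)) :=
    (inner_self_eq_norm_sq _).symm
  rw [h1, L2.inner_def, ← integral_re (L2.integrable_inner _ _)]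
  refine integral_congr_ae ?_
  filter_upwards [hf.coeFn_toLp] with z hz
  simp only [RCLike.inner_apply, hz]
  rw [Complex.mul_conj]
  rw [Complex.normSq_eq_norm_sq]; exact RCLike.ofReal_re _

lemma mem_bergman_congr {u : (Fin n → ℂ) → ℂ} (f : Lp ℂ 2 (volume.restrict Ω))
    (hu : u =ᵐ[volume.restrict Ω] ⇑f) (h : IsWeakDbar Ω u 0) : f ∈ bergmanSpace Ω :=
  weakDbar_congr hu h

lemma bergman_sub (hΩ_bdd : Bornology.IsBounded Ω) {f g : Lp ℂ 2 (volume.restrict Ω)}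
    (hf : f ∈ bergmanSpace Ω) (hg : g ∈ bergmanSpace Ω) : f - g ∈ bergmanSpace Ω := by
  have hsub : IsWeakDbar Ω (fun z => f z - g z) 0 :=
    weakDbar_sub_same hΩ_bdd hf hg (Lp.memLp f) (Lp.memLp g)
  refine mem_bergman_congr _ ?_ hsub
  filter_upwards [Lp.coeFn_sub f g] with z hz
  rw [hz, Pi.sub_apply]

lemma P_fix (hΩ_bdd : Bornology.IsBounded Ω)
    (P : Lp ℂ 2 (volume.restrict Ω) →L[ℂ] Lp ℂ 2 (volume.restrict Ω))
    (hP_mem : ∀ f, P f ∈ bergmanSpace Ω)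
    (hP_orth : ∀ f, ∀ g ∈ bergmanSpace Ω, (inner ℂ (f - P f) g : ℂ) = 0)
    {f : Lp ℂ 2 (volume.restrict Ω)} (hf : f ∈ bergmanSpace Ω) : P f = f := by
  have hsub : f - P f ∈ bergmanSpace Ω := bergman_sub hΩ_bdd hf (hP_mem f)
  have h0 : (inner ℂ (f - P f) (f - P f) : ℂ) = 0 := hP_orth f (f - P f) hsub
  have := inner_self_eq_zero.mp h0
  exact ((sub_eq_zero.mp this)).symm

/-- The main lemma: the claimed expression is the minimal solution. -/
lemma minsol_main (hΩ_open : IsOpen Ω) (hΩ_bdd : Bornology.IsBounded Ω)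
    {h : Fin n → (Fin n → ℂ) → ℂ}
    (h_L2 : ∀ j, MemLp (h j) 2 (volume.restrict Ω))
    (h_hol : ∀ j, IsWeakDbar Ω (h j) 0)
    (P : Lp ℂ 2 (volume.restrict Ω) →L[ℂ] Lp ℂ 2 (volume.restrict Ω))
    (hP_mem : ∀ f, P f ∈ bergmanSpace Ω)
    (hP_orth : ∀ f, ∀ g ∈ bergmanSpace Ω, (inner ℂ (f - P f) g : ℂ) = 0)
    (hL : Fin n → Lp ℂ 2 (volume.restrict Ω))
    (hhL : ∀ j, (hL j : (Fin n → ℂ) → ℂ) =ᵐ[volume.restrict Ω] h j)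
    (w : Fin n → Lp ℂ 2 (volume.restrict Ω))
    (hw : ∀ j, (w j : (Fin n → ℂ) → ℂ) =ᵐ[volume.restrict Ω]
      fun z => (starRingEnd ℂ) (z j) * h j z)
    (t : Fin n → Lp ℂ 2 (volume.restrict Ω))
    (ht : ∀ j, (t j : (Fin n → ℂ) → ℂ) =ᵐ[volume.restrict Ω]
      fun z => (starRingEnd ℂ) (z j) * (P (hL j) : (Fin n → ℂ) → ℂ) z) :
    IsMinSol Ω (fun z j => h j z)
      (((-∑ j, (P (w j) - t j)) : Lp ℂ 2 (volume.restrict Ω)) : (Fin n → ℂ) → ℂ) := by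
  classical
  have hLberg : ∀ j, hL j ∈ bergmanSpace Ω :=
    fun j => mem_bergman_congr _ (hhL j).symm (h_hol j)
  have hPfix : ∀ j, P (hL j) = hL j :=
    fun j => P_fix hΩ_bdd P hP_mem hP_orth (hLberg j)
  have htw : ∀ j, t j = w j := by
    intro j
    apply Lp.ext
    have ht' := ht j
    rw [hPfix j] at ht'
    filter_upwards [ht', hw j, hhL j] with z h1 h2 h3
    rw [h1, h2, h3]
  set V : Lp ℂ 2 (volume.restrict Ω) := ∑ j, w j with hV
  have hXeq : (-∑ j, (P (w j) - t j)) = V - P V := by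
    simp only [htw, hV, Finset.sum_sub_distrib, map_sum]
    abel
  set v : (Fin n → ℂ) → ℂ := fun z => ∑ j, (starRingEnd ℂ) (z j) * h j z with hv
  have hVcoe : ⇑V =ᵐ[volume.restrict Ω] v := by
    have h1 := Lp_coeFn_sum Finset.univ w
    refine h1.trans ?_
    have h2 : ∀ᵐ z ∂(volume.restrict Ω), ∀ j : Fin n, (w j : (Fin n → ℂ) → ℂ) z
        = (starRingEnd ℂ) (z j) * h j z := ae_all_iff.mpr hw
    filter_upwards [h2] with z hz
    simp only [hv]
    exact Finset.sum_congr rfl fun j _ => hz j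
  have hXcoe : (((-∑ j, (P (w j) - t j)) : Lp ℂ 2 (volume.restrict Ω)) : (Fin n → ℂ) → ℂ)
      =ᵐ[volume.restrict Ω] fun z => v z - (P V : (Fin n → ℂ) → ℂ) z := by
    rw [hXeq]
    filter_upwards [Lp.coeFn_sub V (P V), hVcoe] with z h1 h2
    rw [h1]
    simp only [Pi.sub_apply, h2]
  refine ⟨Lp.memLp _, ?_, ?_⟩
  · refine weakDbar_congr hXcoe.symm ?_
    exact weakDbar_sub_zero hΩ_bdd (weakDbar_v hΩ_open hΩ_bdd h_L2 h_hol) (hP_mem V)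
      (memL2_v hΩ_open hΩ_bdd h_L2) (Lp.memLp _)
  · intro g hg2 hg0
    have hgL : ⇑(hg2.toLp g) =ᵐ[volume.restrict Ω] g := hg2.coeFn_toLp
    have hgberg : hg2.toLp g ∈ bergmanSpace Ω := mem_bergman_congr _ hgL.symm hg0
    have horth := hP_orth V (hg2.toLp g) hgberg
    have heq := integral_mul_conj_eq (Ω := Ω) (-∑ j, (P (w j) - t j)) (hg2.toLp g)
      (Filter.EventuallyEq.refl _ _) hgL
    rw [heq, hXeq, horth, map_zero]

/-- Uniqueness of minimal solutions. -/
lemma minsol_unique (hΩ_bdd : Bornology.IsBounded Ω) {α : (Fin n → ℂ) → Fin n → ℂ}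
    {u u' : (Fin n → ℂ) → ℂ} (hu : IsMinSol Ω α u) (hu' : IsMinSol Ω α u') :
    u =ᵐ[volume.restrict Ω] u' := by
  obtain ⟨hu2, hud, huo⟩ := hu
  obtain ⟨hu'2, hu'd, hu'o⟩ := hu'
  have hd2 : MemLp (fun z => u z - u' z) 2 (volume.restrict Ω) := hu2.sub hu'2
  have hd0 : IsWeakDbar Ω (fun z => u z - u' z) 0 :=
    weakDbar_sub_same hΩ_bdd hud hu'd hu2 hu'2
  have h1 := huo _ hd2 hd0
  have h2 := hu'o _ hd2 hd0
  have hiu : Integrable (fun z => u z * (starRingEnd ℂ) (u z - u' z)) (volume.restrict Ω) :=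
    integ_mul_conj (hu2.toLp u) (hd2.toLp _) hu2.coeFn_toLp hd2.coeFn_toLp
  have hiu' : Integrable (fun z => u' z * (starRingEnd ℂ) (u z - u' z)) (volume.restrict Ω) :=
    integ_mul_conj (hu'2.toLp u') (hd2.toLp _) hu'2.coeFn_toLp hd2.coeFn_toLp
  have h3 : ∫ z in Ω, (u z - u' z) * (starRingEnd ℂ) (u z - u' z) = 0 := by
    have hsp : ∫ z in Ω, (u z - u' z) * (starRingEnd ℂ) (u z - u' z) =
        (∫ z in Ω, u z * (starRingEnd ℂ) (u z - u' z))
          - ∫ z in Ω, u' z * (starRingEnd ℂ) (u z - u' z) := by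
      rw [← integral_sub hiu hiu']
      congr 1; funext z; ring
    rw [hsp, h1, h2, sub_zero]
  have h4 := integral_mul_conj_eq (Ω := Ω) (hd2.toLp _) (hd2.toLp _)
    hd2.coeFn_toLp hd2.coeFn_toLp
  rw [h3] at h4
  have h5 : (inner (𝕜 := ℂ) (hd2.toLp _) (hd2.toLp _) : ℂ) = 0 := by
    have := congrArg (starRingEnd ℂ) h4
    simpa using this.symm
  have h6 : hd2.toLp _ = 0 := inner_self_eq_zero.mp h5
  have h7 : (fun z => u z - u' z) =ᵐ[volume.restrict Ω] 0 := by
    refine (hd2.coeFn_toLp).symm.trans ?_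
    rw [h6]
    exact Lp.coeFn_zero _ _ _
  filter_upwards [h7] with z hz
  exact sub_eq_zero.mp hz
end helpers2

section helpers3

variable {n : ℕ} {Ω : Set (Fin n → ℂ)}

lemma exists_mulc (hΩ_open : IsOpen Ω) (hΩ_bdd : Bornology.IsBounded Ω) (j : Fin n) :
    ∃ mulc : Lp ℂ 2 (volume.restrict Ω) →L[ℂ] Lp ℂ 2 (volume.restrict Ω),
      ∀ f : Lp ℂ 2 (volume.restrict Ω),
        (mulc f : (Fin n → ℂ) → ℂ) =ᵐ[volume.restrict Ω]
          fun z => (starRingEnd ℂ) (z j) * f z := by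
  obtain ⟨C, hC0, hC⟩ := coordBound hΩ_open hΩ_bdd
  set M : Lp ℂ 2 (volume.restrict Ω) → Lp ℂ 2 (volume.restrict Ω) :=
    fun f => (memL2_conj_mul hΩ_open hΩ_bdd (Lp.memLp f) j).toLp _ with hM
  have hMcoe : ∀ f, ⇑(M f) =ᵐ[volume.restrict Ω]
      fun z => (starRingEnd ℂ) (z j) * f z := fun f => MemLp.coeFn_toLp _
  have hadd : ∀ f g, M (f + g) = M f + M g := by
    intro f g
    apply Lp.ext
    filter_upwards [hMcoe (f + g), hMcoe f, hMcoe g, Lp.coeFn_add f g,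
      Lp.coeFn_add (M f) (M g)] with z h1 h2 h3 h4 h5
    rw [h1, h5, Pi.add_apply, h2, h3, h4, Pi.add_apply]
    ring
  have hsmul : ∀ (c : ℂ) f, M (c • f) = c • M f := by
    intro c f
    apply Lp.ext
    filter_upwards [hMcoe (c • f), hMcoe f, Lp.coeFn_smul c f,
      Lp.coeFn_smul c (M f)] with z h1 h2 h3 h4
    rw [h1, h4, Pi.smul_apply, h2, h3, Pi.smul_apply]
    simp only [smul_eq_mul]
    ring
  set Mlin : Lp ℂ 2 (volume.restrict Ω) →ₗ[ℂ] Lp ℂ 2 (volume.restrict Ω) :=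
    { toFun := M, map_add' := hadd, map_smul' := hsmul } with hMlin
  have hbound : ∀ f, ‖Mlin f‖ ≤ C * ‖f‖ := by
    intro f
    have h0 : Mlin f = M f := rfl
    rw [h0, hM]
    rw [Lp.norm_toLp]
    have h1 : eLpNorm (fun z => (starRingEnd ℂ) (z j) * f z) 2 (volume.restrict Ω)
        ≤ eLpNorm ((C : ℂ) • ⇑f) 2 (volume.restrict Ω) := by
      refine eLpNorm_mono_ae ?_
      filter_upwards [hC] with z hz
      rw [Pi.smul_apply, norm_smul, norm_mul]
      refine mul_le_mul_of_nonneg_right ?_ (norm_nonneg _)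
      exact le_trans (by simpa using hz j) (by simp [abs_of_nonneg hC0] : C ≤ ‖(C:ℂ)‖)
    rw [eLpNorm_const_smul] at h1
    have h2 := ENNReal.toReal_mono (by
      exact ENNReal.mul_ne_top ENNReal.coe_ne_top (Lp.eLpNorm_ne_top f)) h1
    rw [ENNReal.toReal_mul, toReal_enorm, ← coe_nnnorm] at h2
    have hcc : (‖(C : ℂ)‖₊ : ℝ) = C := by
      rw [coe_nnnorm, Complex.norm_real, Real.norm_eq_abs, abs_of_nonneg hC0]
    rw [hcc, ← Lp.norm_def] at h2
    exact h2
  refine ⟨Mlin.mkContinuous C hbound, fun f => hMcoe f⟩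

lemma isCompactOperator_finsum {N : Type*} [NormedAddCommGroup N] [NormedSpace ℂ N]
    {M : Type*} [NormedAddCommGroup M] [NormedSpace ℂ M]
    {ι : Type*} [DecidableEq ι] (s : Finset ι) (f : ι → M → N)
    (hf : ∀ k ∈ s, IsCompactOperator (f k)) :
    IsCompactOperator (fun x => ∑ k ∈ s, f k x) := by
  induction s using Finset.induction_on with
  | empty => simp only [Finset.sum_empty]; exact isCompactOperator_zero
  | @insert a s ha ih =>
      have h1 := (hf a (Finset.mem_insert_self a s)).add
        (ih fun k hk => hf k (Finset.mem_insert_of_mem hk))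
      have h2 : (fun x => ∑ k ∈ insert a s, f k x)
          = (fun x => f a x) + fun x => ∑ k ∈ s, f k x := by
        funext x
        simp [Finset.sum_insert ha]
      rw [h2]
      exact h1

end helpers3


/-- **Remark 2.**  Let `Ω ⊂ ℂⁿ` be bounded open and `h₁, …, hₙ ∈ A²(Ω)`.
Then `v = ∑ conj(zⱼ) hⱼ ∈ L²(Ω)` has weak `∂̄` equal to `(h₁, …, hₙ)`, the minimal solution
of `∂̄u = (h₁, …, hₙ)` exists and equals `−∑ⱼ [P, conj zⱼ] hⱼ`; consequently, if each
commutator `[P, conj zⱼ]` is compact on `L²(Ω)`, then the canonical solution operator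
restricted to `(0,1)`-forms with holomorphic coefficients is compact. -/
theorem stmt18 {n : ℕ} (Ω : Set (Fin n → ℂ))
    (hΩ_open : IsOpen Ω) (hΩ_bdd : Bornology.IsBounded Ω)
    (h : Fin n → (Fin n → ℂ) → ℂ)
    (h_L2 : ∀ j, MemLp (h j) 2 (volume.restrict Ω))
    (h_hol : ∀ j, IsWeakDbar Ω (h j) 0)
    -- the orthogonal projection onto the Bergman space
    (P : Lp ℂ 2 (volume.restrict Ω) →L[ℂ] Lp ℂ 2 (volume.restrict Ω))
    (hP_mem : ∀ f, P f ∈ bergmanSpace Ω)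
    (hP_orth : ∀ f, ∀ g ∈ bergmanSpace Ω, (inner ℂ (f - P f) g : ℂ) = 0)
    -- L² representatives of `hⱼ`, `conj(zⱼ)·hⱼ` and `conj(zⱼ)·(P hⱼ)`
    (hL : Fin n → Lp ℂ 2 (volume.restrict Ω))
    (hhL : ∀ j, (hL j : (Fin n → ℂ) → ℂ) =ᵐ[volume.restrict Ω] h j)
    (w : Fin n → Lp ℂ 2 (volume.restrict Ω))
    (hw : ∀ j, (w j : (Fin n → ℂ) → ℂ) =ᵐ[volume.restrict Ω]
      fun z => (starRingEnd ℂ) (z j) * h j z)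
    (t : Fin n → Lp ℂ 2 (volume.restrict Ω))
    (ht : ∀ j, (t j : (Fin n → ℂ) → ℂ) =ᵐ[volume.restrict Ω]
      fun z => (starRingEnd ℂ) (z j) * (P (hL j) : (Fin n → ℂ) → ℂ) z) :
    (MemLp (fun z => ∑ j, (starRingEnd ℂ) (z j) * h j z) 2 (volume.restrict Ω)
      ∧ IsWeakDbar Ω (fun z => ∑ j, (starRingEnd ℂ) (z j) * h j z) (fun z j => h j z)
      ∧ IsMinSol Ω (fun z j => h j z)
          (((-∑ j, (P (w j) - t j)) : Lp ℂ 2 (volume.restrict Ω)) : (Fin n → ℂ) → ℂ))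
    ∧ ((∀ (j : Fin n) (mulc : Lp ℂ 2 (volume.restrict Ω) →L[ℂ] Lp ℂ 2 (volume.restrict Ω)),
          (∀ f : Lp ℂ 2 (volume.restrict Ω),
            (mulc f : (Fin n → ℂ) → ℂ) =ᵐ[volume.restrict Ω]
              fun z => (starRingEnd ℂ) (z j) * f z) →
          IsCompactOperator (fun f : Lp ℂ 2 (volume.restrict Ω) => P (mulc f) - mulc (P f))) →
        IsCompact (closure {usol : Lp ℂ 2 (volume.restrict Ω) |
          ∃ hh : Fin n → (Fin n → ℂ) → ℂ,
            (∀ j, MemLp (hh j) 2 (volume.restrict Ω)) ∧ (∀ j, IsWeakDbar Ω (hh j) 0) ∧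
            (∑ j, ∫ z in Ω, ‖hh j z‖ ^ 2) ≤ 1 ∧
            IsMinSol Ω (fun z j => hh j z) usol})) := by
  classical
  constructor
  · exact ⟨memL2_v hΩ_open hΩ_bdd h_L2,
      weakDbar_v hΩ_open hΩ_bdd h_L2 h_hol,
      minsol_main hΩ_open hΩ_bdd h_L2 h_hol P hP_mem hP_orth hL hhL w hw t ht⟩
  · intro Hcomm
    choose mulc hmulc using fun j : Fin n => exists_mulc hΩ_open hΩ_bdd j
    set Tlin : (Fin n → Lp ℂ 2 (volume.restrict Ω)) →L[ℂ] Lp ℂ 2 (volume.restrict Ω) :=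
      -(∑ j, ((P.comp (mulc j) - (mulc j).comp P).comp
        (ContinuousLinearMap.proj (R := ℂ)
          (φ := fun _ : Fin n => Lp ℂ 2 (volume.restrict Ω)) j))) with hTlin
    have hTapp : ∀ F, Tlin F = -∑ j, (P (mulc j (F j)) - mulc j (P (F j))) := by
      intro F
      simp [hTlin, ContinuousLinearMap.sum_apply, ContinuousLinearMap.sub_apply,
        ContinuousLinearMap.comp_apply, ContinuousLinearMap.proj_apply,
        ContinuousLinearMap.neg_apply]
    have hTc : IsCompactOperator ⇑Tlin := by
      have hsum : IsCompactOperator (fun F : Fin n → Lp ℂ 2 (volume.restrict Ω) =>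
          ∑ j, (P (mulc j (F j)) - mulc j (P (F j)))) := by
        refine isCompactOperator_finsum Finset.univ _ fun k _ => ?_
        have hk := Hcomm k (mulc k) (hmulc k)
        exact hk.comp_clm (ContinuousLinearMap.proj (R := ℂ)
          (φ := fun _ : Fin n => Lp ℂ 2 (volume.restrict Ω)) k)
      have heq : ⇑Tlin = -(fun F : Fin n → Lp ℂ 2 (volume.restrict Ω) =>
          ∑ j, (P (mulc j (F j)) - mulc j (P (F j)))) := by
        funext F
        rw [hTapp]
        rfl
      rw [heq]
      exact hsum.neg
    have hK := IsCompactOperator.isCompact_closure_image_of_isVonNBounded (𝕜₁ := ℂ)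
      (f := Tlin.toLinearMap) hTc
      (NormedSpace.isVonNBounded_closedBall ℂ (Fin n → Lp ℂ 2 (volume.restrict Ω)) 1)
    refine IsCompact.of_isClosed_subset hK isClosed_closure (closure_mono ?_)
    rintro usol ⟨hh, hh2, hhol, hbd, hmin⟩
    set HL : Fin n → Lp ℂ 2 (volume.restrict Ω) := fun j => (hh2 j).toLp _ with hHLdef
    set W : Fin n → Lp ℂ 2 (volume.restrict Ω) :=
      fun j => (memL2_conj_mul hΩ_open hΩ_bdd (hh2 j) j).toLp _ with hWdef
    set T : Fin n → Lp ℂ 2 (volume.restrict Ω) := fun j => mulc j (P (HL j)) with hTdef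
    have hHL : ∀ j, ⇑(HL j) =ᵐ[volume.restrict Ω] hh j := fun j => (hh2 j).coeFn_toLp
    have hWc : ∀ j, ⇑(W j) =ᵐ[volume.restrict Ω]
        fun z => (starRingEnd ℂ) (z j) * hh j z := fun j => MemLp.coeFn_toLp _
    have hTcoe : ∀ j, ⇑(T j) =ᵐ[volume.restrict Ω]
        fun z => (starRingEnd ℂ) (z j) * (P (HL j) : (Fin n → ℂ) → ℂ) z :=
      fun j => hmulc j (P (HL j))
    have hmin2 := minsol_main hΩ_open hΩ_bdd hh2 hhol P hP_mem hP_orth HL hHL W hWc T hTcoe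
    have huniq := minsol_unique hΩ_bdd hmin hmin2
    have husol : usol = -∑ j, (P (W j) - T j) := Lp.ext huniq
    have hWm : ∀ j, mulc j (HL j) = W j := by
      intro j
      apply Lp.ext
      filter_upwards [hmulc j (HL j), hWc j, hHL j] with z h1 h2 h3
      rw [h1, h2, h3]
    have hTHL : Tlin HL = -∑ j, (P (W j) - T j) := by
      rw [hTapp]
      congr 1
      exact Finset.sum_congr rfl fun j _ => by rw [hWm j]
    refine ⟨HL, ?_, hTHL.trans husol.symm⟩
    rw [Metric.mem_closedBall, dist_zero_right]
    refine (pi_norm_le_iff_of_nonneg zero_le_one).mpr fun j => ?_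
    have hsq : ‖HL j‖ ^ 2 = ∫ z in Ω, ‖hh j z‖ ^ 2 := by
      rw [hHLdef]
      exact toLp_norm_sq_eq (hh2 j)
    have hle : (∫ z in Ω, ‖hh j z‖ ^ 2) ≤ 1 := by
      refine le_trans ?_ hbd
      exact Finset.single_le_sum (f := fun k => ∫ z in Ω, ‖hh k z‖ ^ 2)
        (fun k _ => integral_nonneg fun z => by positivity) (Finset.mem_univ j)
    nlinarith [norm_nonneg (HL j)]
end
end
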